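/- arXiv:2506.20072 — 2 statements merged into one kernel-verified Lean document; each statement's English description precedes it below -/
import Mathlib

section
/- Let n ≥ 1 and let G = K_{n,n} be the complete bipartite graph. Form G_ω by listing the n² edges of G in a uniformly random order and taking the shortest initial segment in which every vertex has degree at least 1. Then the expected number of perfect matchings of G contained in G_ω equals n!·(2/binom(2n−1, n) − 1/binom(3n−2, n)). -/
open Finset

/-- The degree of a vertex `v` in the graph whose edge set is the finite set `s`
of edges (elements of `Sym2 V`). -/
def degIn {V : Type*} [DecidableEq V] (s : Finset (Sym2 V)) (v : V) : ℕ :=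
  (s.filter (fun e => v ∈ e)).card

/-- Given an ordering `ω` of a finite set `s` of edges, the set consisting of the
first `i` edges `e_{ω(1)}, …, e_{ω(i)}`. -/
def prefixEdges {V : Type*} [DecidableEq V] {s : Finset (Sym2 V)}
    (ω : Fin s.card ≃ {e : Sym2 V // e ∈ s}) (i : ℕ) : Finset (Sym2 V) :=
  (Finset.univ.filter (fun j : Fin s.card => (j : ℕ) < i)).image (fun j => (ω j : Sym2 V))

/-- `k(ω)`: the least `i` such that every vertex has degree at least `δ` in the graph
formed by the first `i` edges of the ordering `ω`. -/
noncomputable def stopIndex {V : Type*} [Fintype V] [DecidableEq V] (δ : ℕ)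
    {s : Finset (Sym2 V)} (ω : Fin s.card ≃ {e : Sym2 V // e ∈ s}) : ℕ :=
  sInf {i | ∀ v : V, δ ≤ degIn (prefixEdges ω i) v}

/-- The edge set of `G_ω`, i.e. the first `k(ω)` edges of the ordering `ω`. -/
noncomputable def finalEdges {V : Type*} [Fintype V] [DecidableEq V] (δ : ℕ)
    {s : Finset (Sym2 V)} (ω : Fin s.card ≃ {e : Sym2 V // e ∈ s}) : Finset (Sym2 V) :=
  prefixEdges ω (stopIndex δ ω)

/-- A graph is `δ`-regular: every vertex has exactly `δ` neighbours. -/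
def regOfDegree {V : Type*} (J : SimpleGraph V) (δ : ℕ) : Prop :=
  ∀ v : V, (J.neighborSet v).ncard = δ

instance (n : ℕ) : DecidableRel (completeBipartiteGraph (Fin n) (Fin n)).Adj := fun a b => by
  unfold completeBipartiteGraph
  dsimp only
  infer_instance


/-!
A perfect matching of `K_{n,n}` is the edge set `M` of a permutation. Since `M` covers every
vertex, the process stops no later than the arrival of the last edge `e` of `M`; hence
`M ⊆ G_ω` exactly when `e` arrives while one of its endpoints `v` is still uncovered, i.e. when
`e` is also the first edge at `v`. For `e = uw` this is the union of the events
"`M ∖ e` before `e` before (edges at `v`) ∖ `e`" for `v = u, w`, whose intersection is the same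
event for the edges at `u` or `w`. In a uniformly random order an element comes after a given
`a`-set and before a disjoint `c`-set with probability `a! c! / (a + c + 1)!`: for `a = 0` by
symmetry, and in general because an extra element lands either before or after it. Summing over
the `n` edges `e` and the `n!` matchings, with `a = n - 1` and `c = n - 1, n - 1, 2n - 2`, gives
the formula.
-/

open scoped Nat

section Orderings

variable {ι α : Type*} [Fintype ι] [LinearOrder ι] [Fintype α] [DecidableEq α]

def betweenOrders (X : Finset α) (x : α) (Y : Finset α) : Finset (ι ≃ α) :=
  {σ | (∀ f ∈ X, σ.symm f < σ.symm x) ∧ ∀ g ∈ Y, σ.symm x < σ.symm g}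

noncomputable def betweenProb (a c : ℕ) : ℝ := a ! * c ! / (a + c + 1)!

lemma betweenProb_zero_left (c : ℕ) : betweenProb 0 c = 1 / (c + 1) := by
  rw [betweenProb, Nat.factorial_zero, zero_add, Nat.factorial_succ]
  push_cast
  field_simp

lemma betweenProb_succ_left (a c : ℕ) :
    betweenProb (a + 1) c = betweenProb a c - betweenProb a (c + 1) := by
  simp only [betweenProb, show a + (c + 1) + 1 = a + c + 1 + 1 by ring,
    show a + 1 + c + 1 = a + c + 1 + 1 by ring, Nat.factorial_succ]
  push_cast
  field_simp
  ring

lemma mul_betweenProb_sub_one {a : ℕ} (ha : 1 ≤ a) (c : ℕ) :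
    (a : ℝ) * betweenProb (a - 1) c = 1 / ((a + c).choose a : ℝ) := by
  obtain ⟨a, rfl⟩ := Nat.exists_eq_add_of_le' ha
  have h := Nat.choose_mul_factorial_mul_factorial (Nat.le_add_right (a + 1) c)
  rw [Nat.add_sub_cancel_left] at h
  rw [Nat.add_sub_cancel, betweenProb, show a + c + 1 = a + 1 + c by ring, ← h,
    Nat.factorial_succ]
  push_cast
  field_simp

lemma mem_betweenOrders_trans_swap {D : Finset α} {x y : α} (hx : x ∈ D) (hy : y ∈ D)
    {σ : ι ≃ α} (hσ : σ ∈ betweenOrders ∅ x (D.erase x)) :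
    σ.trans (Equiv.swap x y) ∈ betweenOrders ∅ y (D.erase y) := by
  simp only [betweenOrders, mem_filter, mem_univ, true_and, notMem_empty, IsEmpty.forall_iff,
    implies_true, mem_erase] at hσ ⊢
  intro g ⟨hgy, hgD⟩
  simp only [Equiv.symm_trans_apply, Equiv.symm_swap, Equiv.swap_apply_right]
  refine hσ _ ⟨fun h => hgy ((Equiv.swap x y).injective
    (h.trans (Equiv.swap_apply_right x y).symm)), ?_⟩
  rcases eq_or_ne g x with rfl | hgx
  · rwa [Equiv.swap_apply_left]
  · rwa [Equiv.swap_apply_of_ne_of_ne hgx hgy]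

lemma card_betweenOrders_erase_eq {D : Finset α} {x y : α} (hx : x ∈ D) (hy : y ∈ D) :
    #(betweenOrders ∅ x (D.erase x) : Finset (ι ≃ α)) =
      #(betweenOrders ∅ y (D.erase y) : Finset (ι ≃ α)) :=
  card_nbij' (·.trans (Equiv.swap x y)) (·.trans (Equiv.swap y x))
    (fun _ hσ => mem_betweenOrders_trans_swap hx hy hσ)
    (fun _ hσ => mem_betweenOrders_trans_swap hy hx hσ)
    (fun σ _ => by ext; simp [Equiv.swap_comm y x])
    (fun σ _ => by ext; simp [Equiv.swap_comm y x])

lemma card_mul_card_betweenOrders_erase {D : Finset α} {x : α} (hx : x ∈ D) :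
    #D * #(betweenOrders ∅ x (D.erase x) : Finset (ι ≃ α)) = Fintype.card (ι ≃ α) := by
  have hpart : (univ : Finset (ι ≃ α)) =
      D.biUnion fun y => betweenOrders ∅ y (D.erase y) := by
    refine (eq_univ_of_forall fun σ => ?_).symm
    obtain ⟨y, hy, hmin⟩ := D.exists_min_image σ.symm ⟨x, hx⟩
    simp only [mem_biUnion, betweenOrders, mem_filter, mem_univ, true_and, notMem_empty,
      IsEmpty.forall_iff, implies_true, mem_erase]
    exact ⟨y, hy, fun g ⟨hgy, hgD⟩ =>
      (hmin g hgD).lt_of_ne fun h => hgy (σ.symm.injective h).symm⟩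
  rw [← card_univ, hpart, card_biUnion,
    sum_congr rfl fun y hy => card_betweenOrders_erase_eq hy hx, sum_const, smul_eq_mul]
  intro y hy y' hy' hyy'
  refine disjoint_left.mpr fun σ hσ hσ' => ?_
  simp only [betweenOrders, mem_filter, mem_univ, true_and, notMem_empty, IsEmpty.forall_iff,
    implies_true, mem_erase] at hσ hσ'
  exact (hσ y' ⟨hyy'.symm, hy'⟩).asymm (hσ' y ⟨hyy', hy⟩)

lemma betweenOrders_eq_union (X Y : Finset α) {x f : α} (hfx : f ≠ x) :
    (betweenOrders X x Y : Finset (ι ≃ α)) =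
      betweenOrders (insert f X) x Y ∪ betweenOrders X x (insert f Y) := by
  ext σ
  simp only [betweenOrders, mem_union, mem_filter, mem_univ, true_and, forall_mem_insert]
  have := (σ.symm.injective.ne hfx).lt_or_gt
  tauto

lemma disjoint_betweenOrders_insert (X Y : Finset α) (x f : α) :
    Disjoint (betweenOrders (insert f X) x Y : Finset (ι ≃ α))
      (betweenOrders X x (insert f Y)) := by
  refine disjoint_left.mpr fun σ hσ hσ' => ?_
  simp only [betweenOrders, mem_filter, mem_univ, true_and, forall_mem_insert] at hσ hσ'
  exact hσ.1.1.asymm hσ'.2.1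

theorem card_betweenOrders {X Y : Finset α} {x : α} (hxX : x ∉ X) (hxY : x ∉ Y)
    (hXY : Disjoint X Y) :
    (#(betweenOrders X x Y : Finset (ι ≃ α)) : ℝ) =
      betweenProb #X #Y * Fintype.card (ι ≃ α) := by
  induction X using Finset.induction_on generalizing Y with
  | empty =>
    have h := card_mul_card_betweenOrders_erase (ι := ι) (mem_insert_self x Y)
    rw [erase_insert hxY, card_insert_of_notMem hxY] at h
    rw [card_empty, betweenProb_zero_left, ← h]
    push_cast
    field_simp
  | insert f X hfX ih =>
    have hfx : f ≠ x := ne_of_mem_of_not_mem (mem_insert_self f X) hxX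
    have hfY : f ∉ Y := disjoint_left.mp hXY (mem_insert_self f X)
    have hxX' : x ∉ X := fun h => hxX (mem_insert_of_mem h)
    have hXY' : Disjoint X Y := disjoint_of_subset_left (subset_insert f X) hXY
    have hsplit := congrArg (fun t => (#t : ℝ)) (betweenOrders_eq_union (ι := ι) X Y hfx)
    simp only [card_union_of_disjoint (disjoint_betweenOrders_insert X Y x f), Nat.cast_add,
      ih hxX' hxY hXY',
      ih hxX' (by simp [hfx.symm, hxY]) (disjoint_insert_right.mpr ⟨hfX, hXY'⟩),
      card_insert_of_notMem hfY] at hsplit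
    rw [card_insert_of_notMem hfX, betweenProb_succ_left]
    linarith

end Orderings

section Stopping

variable {V : Type*} [DecidableEq V] {s : Finset (Sym2 V)}

abbrev EdgeOrdering (s : Finset (Sym2 V)) : Type _ := Fin s.card ≃ {e : Sym2 V // e ∈ s}

/-- The position of `f` in the ordering `ω`, with the junk value `0` when `f ∉ s`. -/
def edgePos (ω : EdgeOrdering s) (f : Sym2 V) : ℕ :=
  if hf : f ∈ s then ω.symm ⟨f, hf⟩ else 0

variable {ω : EdgeOrdering s}

lemma edgePos_of_mem {f : Sym2 V} (hf : f ∈ s) : edgePos ω f = ω.symm ⟨f, hf⟩ := dif_pos hf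

lemma edgePos_injOn : Set.InjOn (edgePos ω) s := fun f hf g hg h => by
  rw [edgePos_of_mem hf, edgePos_of_mem hg] at h
  simpa using ω.symm.injective (Fin.val_injective h)

lemma mem_prefixEdges_iff {f : Sym2 V} (hf : f ∈ s) {i : ℕ} :
    f ∈ prefixEdges ω i ↔ edgePos ω f < i := by
  simp only [prefixEdges, mem_image, mem_filter, mem_univ, true_and, edgePos_of_mem hf]
  constructor
  · rintro ⟨j, hj, rfl⟩
    simpa using hj
  · exact fun h => ⟨_, h, by simp⟩

lemma prefixEdges_subset (i : ℕ) : prefixEdges ω i ⊆ s := by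
  intro f hf
  obtain ⟨j, -, rfl⟩ := mem_image.mp hf
  exact (ω j).2

lemma one_le_degIn_iff {t : Finset (Sym2 V)} {v : V} : 1 ≤ degIn t v ↔ ∃ g ∈ t, v ∈ g :=
  card_pos.trans filter_nonempty_iff

variable [Fintype V]

lemma stopIndex_le_iff {δ : ℕ} (hs : ∀ v, δ ≤ degIn s v) {i : ℕ} :
    stopIndex δ ω ≤ i ↔ ∀ v, δ ≤ degIn (prefixEdges ω i) v := by
  have hmono : Monotone fun i => ∀ v, δ ≤ degIn (prefixEdges ω i) v := by
    intro i j hij hi v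
    refine (hi v).trans (card_le_card (filter_subset_filter _ fun f hf => ?_))
    have hfs := prefixEdges_subset i hf
    rw [mem_prefixEdges_iff hfs] at hf ⊢
    omega
  have hfull : ∀ v, δ ≤ degIn (prefixEdges ω s.card) v := by
    intro v
    convert hs v using 2
    refine (prefixEdges_subset _).antisymm fun f hf => ?_
    rw [mem_prefixEdges_iff hf, edgePos_of_mem hf]
    exact Fin.is_lt _
  have hne : {i | ∀ v, δ ≤ degIn (prefixEdges ω i) v}.Nonempty := ⟨s.card, hfull⟩
  exact ⟨fun h => hmono h (Nat.sInf_mem hne), fun h => Nat.sInf_le h⟩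

lemma lt_stopIndex_one_iff (hs : ∀ v, 1 ≤ degIn s v) {i : ℕ} :
    i < stopIndex 1 ω ↔ ∃ v, ∀ g ∈ s, v ∈ g → i ≤ edgePos ω g := by
  rw [← not_le, stopIndex_le_iff hs]
  simp only [one_le_degIn_iff, not_forall, not_exists, not_and]
  refine exists_congr fun v => ⟨fun h g hg hvg => ?_, fun h g hg hvg => ?_⟩
  · exact not_lt.mp fun hgi => h g ((mem_prefixEdges_iff hg).mpr hgi) hvg
  · have hgs := prefixEdges_subset i hg
    exact (h g hgs hvg).not_gt ((mem_prefixEdges_iff hgs).mp hg)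

variable (ω) in
def IsStoppingEdge (M : Finset (Sym2 V)) (e : Sym2 V) : Prop :=
  (∀ f ∈ M.erase e, edgePos ω f < edgePos ω e) ∧
    ∃ v ∈ e, ∀ g ∈ (s.filter (v ∈ ·)).erase e, edgePos ω e < edgePos ω g

instance (M : Finset (Sym2 V)) (e : Sym2 V) :
    DecidablePred fun ω : EdgeOrdering s => IsStoppingEdge ω M e :=
  fun _ => by unfold IsStoppingEdge; infer_instance

variable {M : Finset (Sym2 V)}

theorem subset_finalEdges_one_iff [Nonempty V] (hMs : M ⊆ s) (hM : ∀ v, ∃ f ∈ M, v ∈ f) :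
    M ⊆ finalEdges 1 ω ↔ ∃ e ∈ M, IsStoppingEdge ω M e := by
  have hs : ∀ v, 1 ≤ degIn s v := fun v =>
    one_le_degIn_iff.mpr ((hM v).imp fun f hf => ⟨hMs hf.1, hf.2⟩)
  have hpos : ∀ f ∈ M, f ∈ finalEdges 1 ω ↔ edgePos ω f < stopIndex 1 ω := fun f hf =>
    mem_prefixEdges_iff (hMs hf)
  constructor
  · intro hsub
    obtain ⟨v₀⟩ := ‹Nonempty V›
    obtain ⟨e, he, hmax⟩ := M.exists_max_image (edgePos ω) ((hM v₀).imp fun f hf => hf.1)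
    have hlast : ∀ f ∈ M.erase e, edgePos ω f < edgePos ω e := fun f hf =>
      (hmax f (mem_of_mem_erase hf)).lt_of_ne fun h =>
        ne_of_mem_erase hf (edgePos_injOn (hMs (mem_of_mem_erase hf)) (hMs he) h)
    obtain ⟨v, hv⟩ := (lt_stopIndex_one_iff hs).mp ((hpos e he).mp (hsub he))
    obtain ⟨f, hfM, hvf⟩ := hM v
    obtain rfl : f = e := by
      by_contra hfe
      exact (hv f (hMs hfM) hvf).not_gt (hlast f (mem_erase.mpr ⟨hfe, hfM⟩))
    refine ⟨f, hfM, hlast, v, hvf, fun g hg => ?_⟩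
    obtain ⟨hgf, hg⟩ := mem_erase.mp hg
    obtain ⟨hgs, hvg⟩ := mem_filter.mp hg
    exact (hv g hgs hvg).lt_of_ne fun h => hgf (edgePos_injOn hgs (hMs hfM) h.symm)
  · rintro ⟨e, he, hlast, v, hve, hfirst⟩
    have he_lt : edgePos ω e < stopIndex 1 ω := by
      refine (lt_stopIndex_one_iff hs).mpr ⟨v, fun g hgs hvg => ?_⟩
      rcases eq_or_ne g e with rfl | hge
      · rfl
      · exact (hfirst g (mem_erase.mpr ⟨hge, mem_filter.mpr ⟨hgs, hvg⟩⟩)).le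
    intro f hf
    rw [hpos f hf]
    rcases eq_or_ne f e with rfl | hfe
    · exact he_lt
    · exact (hlast f (mem_erase.mpr ⟨hfe, hf⟩)).trans he_lt

theorem card_subset_finalEdges_one [Nonempty V] (hMs : M ⊆ s) (hM : ∀ v, ∃ f ∈ M, v ∈ f) :
    #{ω : EdgeOrdering s | M ⊆ finalEdges 1 ω} =
      ∑ e ∈ M, #{ω : EdgeOrdering s | IsStoppingEdge ω M e} := by
  rw [← card_biUnion]
  · congr 1
    ext ω
    simp [subset_finalEdges_one_iff hMs hM]
  · intro e he e' he' hee'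
    refine disjoint_left.mpr fun ω hω hω' => ?_
    rw [mem_filter] at hω hω'
    exact (hω.2.1 e' (mem_erase.mpr ⟨hee'.symm, he'⟩)).asymm
      (hω'.2.1 e (mem_erase.mpr ⟨hee', he⟩))

end Stopping

section StoppingEdgeCount

variable {V : Type*} [DecidableEq V] {s M : Finset (Sym2 V)}

variable (s) in
def edgeOrdersBetween (X : Finset (Sym2 V)) (e : Sym2 V) (Y : Finset (Sym2 V)) :
    Finset (EdgeOrdering s) :=
  {ω | (∀ f ∈ X, edgePos ω f < edgePos ω e) ∧ ∀ g ∈ Y, edgePos ω e < edgePos ω g}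

lemma card_edgeOrdersBetween {X Y : Finset (Sym2 V)} {e : Sym2 V} (hXs : X ⊆ s) (hYs : Y ⊆ s)
    (he : e ∈ s) (heX : e ∉ X) (heY : e ∉ Y) (hXY : Disjoint X Y) :
    (#(edgeOrdersBetween s X e Y) : ℝ) = betweenProb #X #Y * s.card ! := by
  have hcard : ∀ {Z : Finset (Sym2 V)}, Z ⊆ s → #(Z.subtype (· ∈ s)) = #Z := fun hZ => by
    rw [card_subtype, filter_true_of_mem fun _ h => hZ h]
  have hfilter : edgeOrdersBetween s X e Y =
      betweenOrders (X.subtype (· ∈ s)) ⟨e, he⟩ (Y.subtype (· ∈ s)) := by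
    ext ω
    simp only [edgeOrdersBetween, betweenOrders, mem_filter, mem_univ, true_and, Subtype.forall,
      mem_subtype, Fin.lt_def]
    refine and_congr (forall_congr' fun f => ⟨fun h hfs hf => ?_, fun h hf => ?_⟩)
      (forall_congr' fun g => ⟨fun h hgs hg => ?_, fun h hg => ?_⟩)
    · simpa [edgePos_of_mem hfs, edgePos_of_mem he] using h hf
    · simpa [edgePos_of_mem (hXs hf), edgePos_of_mem he] using h (hXs hf) hf
    · simpa [edgePos_of_mem hgs, edgePos_of_mem he] using h hg
    · simpa [edgePos_of_mem (hYs hg), edgePos_of_mem he] using h (hYs hg) hg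
  rw [hfilter, card_betweenOrders (by simpa using heX) (by simpa using heY)
      (disjoint_left.mpr fun _ hf hf' =>
        disjoint_left.mp hXY (mem_subtype.mp hf) (mem_subtype.mp hf')),
    hcard hXs, hcard hYs, Fintype.card_equiv s.equivFin.symm, Fintype.card_fin]

lemma edgeOrdersBetween_inter (X : Finset (Sym2 V)) (e : Sym2 V) (Y Z : Finset (Sym2 V)) :
    edgeOrdersBetween s X e Y ∩ edgeOrdersBetween s X e Z =
      edgeOrdersBetween s X e (Y ∪ Z) := by
  ext ω
  simp only [edgeOrdersBetween, mem_inter, mem_filter, mem_univ, true_and, forall_mem_union]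
  tauto

lemma filter_isStoppingEdge_eq_union [Fintype V] (u w : V) :
    ({ω | IsStoppingEdge ω M s(u, w)} : Finset (EdgeOrdering s)) =
      edgeOrdersBetween s (M.erase s(u, w)) s(u, w) ((s.filter (u ∈ ·)).erase s(u, w)) ∪
        edgeOrdersBetween s (M.erase s(u, w)) s(u, w) ((s.filter (w ∈ ·)).erase s(u, w)) := by
  ext ω
  have hpair : ∀ P : V → Prop, (∃ v ∈ s(u, w), P v) ↔ P u ∨ P w := fun P => by
    simp only [Sym2.mem_iff, exists_eq_or_imp, exists_eq_left]
  simp only [IsStoppingEdge, edgeOrdersBetween, mem_union, mem_filter, mem_univ, true_and, hpair,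
    and_or_left]

lemma disjoint_erase_filter_mem {e : Sym2 V} {v : V} (hM : ∀ v, ∃! f, f ∈ M ∧ v ∈ f)
    (he : e ∈ M) (hve : v ∈ e) : Disjoint (M.erase e) ((s.filter (v ∈ ·)).erase e) :=
  disjoint_left.mpr fun _ hf hf' =>
    ne_of_mem_erase hf ((hM v).unique
      ⟨mem_of_mem_erase hf, (mem_filter.mp (mem_of_mem_erase hf')).2⟩ ⟨he, hve⟩)

lemma disjoint_erase_filter_mem_left_right {u w : V} (huw : u ≠ w) :
    Disjoint ((s.filter (u ∈ ·)).erase s(u, w)) ((s.filter (w ∈ ·)).erase s(u, w)) :=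
  disjoint_left.mpr fun _ hu hw => ne_of_mem_erase hu ((Sym2.mem_and_mem_iff huw).mp
    ⟨(mem_filter.mp (mem_of_mem_erase hu)).2, (mem_filter.mp (mem_of_mem_erase hw)).2⟩)

theorem card_isStoppingEdge [Fintype V] {u w : V} (huw : u ≠ w) (hMs : M ⊆ s)
    (hM : ∀ v, ∃! f, f ∈ M ∧ v ∈ f) (he : s(u, w) ∈ M) :
    (#{ω : EdgeOrdering s | IsStoppingEdge ω M s(u, w)} : ℝ) =
      s.card ! * (betweenProb (#M - 1) (degIn s u - 1) + betweenProb (#M - 1) (degIn s w - 1) -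
        betweenProb (#M - 1) (degIn s u - 1 + (degIn s w - 1))) := by
  set e := s(u, w)
  set Y : V → Finset (Sym2 V) := fun v => (s.filter (v ∈ ·)).erase e
  have hYs : ∀ v, Y v ⊆ s := fun v => (erase_subset _ _).trans (filter_subset _ s)
  have hcount : ∀ Z ⊆ s, e ∉ Z → Disjoint (M.erase e) Z →
      (#(edgeOrdersBetween s (M.erase e) e Z) : ℝ) = betweenProb (#M - 1) #Z * s.card ! :=
    fun Z hZs heZ hMZ => by
      rw [← card_erase_of_mem he]
      exact card_edgeOrdersBetween ((erase_subset e M).trans hMs) hZs (hMs he) (notMem_erase e M)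
        heZ hMZ
  have hcard_Y : ∀ v ∈ e, #(Y v) = degIn s v - 1 := fun v hv =>
    card_erase_of_mem (mem_filter.mpr ⟨hMs he, hv⟩)
  have hdisj_u := disjoint_erase_filter_mem (s := s) hM he (Sym2.mem_mk_left u w)
  have hdisj_w := disjoint_erase_filter_mem (s := s) hM he (Sym2.mem_mk_right u w)
  have hIE := card_union_add_card_inter (edgeOrdersBetween s (M.erase e) e (Y u))
    (edgeOrdersBetween s (M.erase e) e (Y w))
  rw [← filter_isStoppingEdge_eq_union, edgeOrdersBetween_inter] at hIE
  replace hIE := congrArg (Nat.cast : ℕ → ℝ) hIE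
  push_cast at hIE
  rw [hcount _ (hYs u) (notMem_erase _ _) hdisj_u, hcount _ (hYs w) (notMem_erase _ _) hdisj_w,
    hcount _ (union_subset (hYs u) (hYs w)) (by simp [Y])
      (disjoint_union_right.mpr ⟨hdisj_u, hdisj_w⟩),
    card_union_of_disjoint (disjoint_erase_filter_mem_left_right huw),
    hcard_Y u (Sym2.mem_mk_left u w), hcard_Y w (Sym2.mem_mk_right u w)] at hIE
  linarith

end StoppingEdgeCount

lemma regOfDegree_one_iff {V : Type*} [DecidableEq V] (J : SimpleGraph V) :
    regOfDegree J 1 ↔ ∀ v, ∃! e, e ∈ J.edgeSet ∧ v ∈ e := by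
  refine forall_congr' fun v => ?_
  rw [← Set.ncard_congr' (J.incidenceSetEquivNeighborSet v), Set.ncard_eq_one]
  simp only [Set.eq_singleton_iff_unique_mem]
  rfl

lemma edgeSet_fromEdgeSet_of_subset {V : Type*} {G : SimpleGraph V} {M : Set (Sym2 V)}
    (hM : M ⊆ G.edgeSet) : (SimpleGraph.fromEdgeSet M).edgeSet = M := by
  rw [SimpleGraph.edgeSet_fromEdgeSet, sdiff_eq_left, Set.disjoint_left]
  exact fun e he => G.not_isDiag_of_mem_edgeSet (hM he)

section CompleteBipartite

open Sum

variable {n : ℕ}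

lemma mem_edgeSet_completeBipartiteGraph {e : Sym2 (Fin n ⊕ Fin n)} :
    e ∈ (completeBipartiteGraph (Fin n) (Fin n)).edgeSet ↔ ∃ a b, s(inl a, inr b) = e := by
  simp [SimpleGraph.edgeSet_completeBipartiteGraph]

lemma degIn_completeBipartiteGraph (v : Fin n ⊕ Fin n) :
    degIn (completeBipartiteGraph (Fin n) (Fin n)).edgeFinset v = n := by
  rw [degIn, ← SimpleGraph.incidenceFinset_eq_filter, SimpleGraph.card_incidenceFinset_eq_degree,
    ← SimpleGraph.card_neighborFinset_eq_degree, SimpleGraph.neighborFinset_eq_filter]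
  cases v with
  | inl a =>
    rw [show ({x | (completeBipartiteGraph (Fin n) (Fin n)).Adj (inl a) x} : Finset _) =
      univ.map .inr by ext x; cases x <;> simp]
    simp
  | inr b =>
    rw [show ({x | (completeBipartiteGraph (Fin n) (Fin n)).Adj (inr b) x} : Finset _) =
      univ.map .inl by ext x; cases x <;> simp]
    simp

def permMatching (π : Equiv.Perm (Fin n)) : Finset (Sym2 (Fin n ⊕ Fin n)) :=
  univ.image fun a => s(inl a, inr (π a))

variable {π : Equiv.Perm (Fin n)}

lemma mem_permMatching {e : Sym2 (Fin n ⊕ Fin n)} :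
    e ∈ permMatching π ↔ ∃ a, s(inl a, inr (π a)) = e := by
  simp [permMatching]

lemma card_permMatching : #(permMatching π) = n := by
  rw [permMatching, card_image_of_injective, card_univ, Fintype.card_fin]
  intro a a' h
  simpa using h

lemma permMatching_subset_edgeFinset :
    permMatching π ⊆ (completeBipartiteGraph (Fin n) (Fin n)).edgeFinset := by
  intro e he
  obtain ⟨a, rfl⟩ := mem_permMatching.mp he
  simp

lemma existsUnique_mem_permMatching (v : Fin n ⊕ Fin n) :
    ∃! e, e ∈ permMatching π ∧ v ∈ e := by
  obtain ⟨a, hva, huniq⟩ : ∃ a, v ∈ s(inl a, inr (π a)) ∧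
      ∀ a', v ∈ s(inl a', inr (π a')) → a' = a := by
    cases v with
    | inl a => exact ⟨a, by simp, by simp⟩
    | inr b => exact ⟨π.symm b, by simp, fun a' h => by simp_all⟩
  refine ⟨_, ⟨mem_permMatching.mpr ⟨a, rfl⟩, hva⟩, ?_⟩
  rintro e ⟨he, hve⟩
  obtain ⟨a', rfl⟩ := mem_permMatching.mp he
  rw [huniq a' hve]

lemma permMatching_injective : Function.Injective (permMatching (n := n)) := by
  intro π π' h
  refine Equiv.ext fun a => ?_
  have : s(inl a, inr (π a)) ∈ permMatching π' := h ▸ mem_permMatching.mpr ⟨a, rfl⟩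
  obtain ⟨a', ha'⟩ := mem_permMatching.mp this
  obtain ⟨rfl, hπ⟩ : a' = a ∧ π' a' = π a := by simpa using ha'
  exact hπ.symm

lemma exists_permMatching_eq {M : Set (Sym2 (Fin n ⊕ Fin n))}
    (hMK : M ⊆ (completeBipartiteGraph (Fin n) (Fin n)).edgeSet)
    (hM : ∀ v, ∃! e, e ∈ M ∧ v ∈ e) :
    ∃ π : Equiv.Perm (Fin n), ↑(permMatching π) = M := by
  have hpartner : ∀ a, ∃ b, s(inl a, inr b) ∈ M := by
    intro a
    obtain ⟨e, ⟨he, hae⟩, -⟩ := hM (inl a)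
    obtain ⟨a', b, rfl⟩ := mem_edgeSet_completeBipartiteGraph.mp (hMK he)
    obtain rfl : a = a' := by simpa using hae
    exact ⟨b, he⟩
  choose f hf using hpartner
  have hunique : ∀ a b, s(inl a, inr b) ∈ M → b = f a := fun a b h => by
    simpa using (hM (inl a)).unique ⟨h, by simp⟩ ⟨hf a, by simp⟩
  have hinj : Function.Injective f := fun a a' h =>
    inl_injective (Sym2.congr_left.mp
      ((hM (inr (f a))).unique ⟨hf a, by simp⟩ ⟨h ▸ hf a', by simp⟩))
  refine ⟨Equiv.ofBijective f (Finite.injective_iff_bijective.mp hinj),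
    Set.ext fun e => ⟨?_, fun he => ?_⟩⟩
  · rw [mem_coe, mem_permMatching]
    rintro ⟨a, rfl⟩
    exact hf a
  · obtain ⟨a, b, rfl⟩ := mem_edgeSet_completeBipartiteGraph.mp (hMK he)
    exact mem_permMatching.mpr ⟨a, by rw [hunique a b he]; rfl⟩

theorem ncard_regOfDegree_one_subset_eq_card_perm (F : Finset (Sym2 (Fin n ⊕ Fin n))) :
    {J : SimpleGraph (Fin n ⊕ Fin n) | J ≤ completeBipartiteGraph (Fin n) (Fin n) ∧
      regOfDegree J 1 ∧ J.edgeSet ⊆ ↑F}.ncard =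
      #{π : Equiv.Perm (Fin n) | permMatching π ⊆ F} := by
  have hπK : ∀ π : Equiv.Perm (Fin n),
      ↑(permMatching π) ⊆ (completeBipartiteGraph (Fin n) (Fin n)).edgeSet := fun π => by
    simpa using coe_subset.mpr (permMatching_subset_edgeFinset (π := π))
  have hgraph : ∀ π : Equiv.Perm (Fin n),
      (SimpleGraph.fromEdgeSet (permMatching π : Set (Sym2 (Fin n ⊕ Fin n)))).edgeSet =
        permMatching π := fun π =>
    edgeSet_fromEdgeSet_of_subset (hπK π)
  have hset : {J : SimpleGraph (Fin n ⊕ Fin n) | J ≤ completeBipartiteGraph (Fin n) (Fin n) ∧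
      regOfDegree J 1 ∧ J.edgeSet ⊆ ↑F} =
      (fun π => SimpleGraph.fromEdgeSet (permMatching π : Set (Sym2 (Fin n ⊕ Fin n)))) ''
        (({π | permMatching π ⊆ F} : Finset (Equiv.Perm (Fin n))) :
          Set (Equiv.Perm (Fin n))) := by
    ext J
    simp only [Set.mem_ofPred_eq, Set.mem_image, coe_filter, mem_univ, true_and]
    constructor
    · rintro ⟨hJK, hJ, hJF⟩
      obtain ⟨π, hπ⟩ := exists_permMatching_eq (SimpleGraph.edgeSet_subset_edgeSet.mpr hJK)
        ((regOfDegree_one_iff J).mp hJ)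
      refine ⟨π, coe_subset.mp (hπ ▸ hJF), ?_⟩
      rw [hπ, SimpleGraph.fromEdgeSet_edgeSet]
    · rintro ⟨π, hπF, rfl⟩
      refine ⟨?_, ?_, ?_⟩
      · rw [← SimpleGraph.edgeSet_subset_edgeSet, hgraph]
        exact hπK π
      · rw [regOfDegree_one_iff, hgraph]
        exact existsUnique_mem_permMatching
      · rw [hgraph]
        exact coe_subset.mpr hπF
  rw [hset, Set.ncard_image_of_injective _ fun π π' h => permMatching_injective (coe_injective
      ((hgraph π).symm.trans ((congrArg SimpleGraph.edgeSet h).trans (hgraph π')))),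
    Set.ncard_coe_finset]

theorem card_permMatching_subset_finalEdges (hn : 1 ≤ n) (π : Equiv.Perm (Fin n)) :
    (#{ω : EdgeOrdering (completeBipartiteGraph (Fin n) (Fin n)).edgeFinset |
        permMatching π ⊆ finalEdges 1 ω} : ℝ) =
      (completeBipartiteGraph (Fin n) (Fin n)).edgeFinset.card ! *
        (n * (2 * betweenProb (n - 1) (n - 1) - betweenProb (n - 1) (2 * n - 2))) := by
  have : Nonempty (Fin n ⊕ Fin n) := ⟨inl ⟨0, hn⟩⟩
  have hedge : ∀ e ∈ permMatching π,
      (#{ω : EdgeOrdering (completeBipartiteGraph (Fin n) (Fin n)).edgeFinset |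
        IsStoppingEdge ω (permMatching π) e} : ℝ) =
      (completeBipartiteGraph (Fin n) (Fin n)).edgeFinset.card ! *
        (2 * betweenProb (n - 1) (n - 1) - betweenProb (n - 1) (2 * n - 2)) := by
    intro e he
    obtain ⟨a, rfl⟩ := mem_permMatching.mp he
    rw [card_isStoppingEdge inl_ne_inr permMatching_subset_edgeFinset
      existsUnique_mem_permMatching he]
    simp only [degIn_completeBipartiteGraph, card_permMatching,
      show n - 1 + (n - 1) = 2 * n - 2 by omega]
    ring
  rw [card_subset_finalEdges_one permMatching_subset_edgeFinset
      fun v => (existsUnique_mem_permMatching v).exists,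
    Nat.cast_sum, sum_congr rfl hedge, sum_const, card_permMatching, nsmul_eq_mul]
  ring

end CompleteBipartite

/-- Let `G = K_{n,n}`, `n ≥ 1`.  Form `G_ω` by listing the `n²` edges of `G` in a uniformly
random order and stopping as soon as every vertex has degree at least `1`.  The expected
number of perfect matchings (1-regular spanning subgraphs) of `G` contained in `G_ω`
equals `n!·(2/C(2n−1,n) − 1/C(3n−2,n))`. -/
theorem expected_number_of_matchings_in_complete_bipartite (n : ℕ) (hn : 1 ≤ n) :
    (∑ ω : Fin (completeBipartiteGraph (Fin n) (Fin n)).edgeFinset.card ≃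
        {e : Sym2 (Fin n ⊕ Fin n) // e ∈ (completeBipartiteGraph (Fin n) (Fin n)).edgeFinset},
        ({J : SimpleGraph (Fin n ⊕ Fin n) | J ≤ completeBipartiteGraph (Fin n) (Fin n) ∧
            regOfDegree J 1 ∧ J.edgeSet ⊆ ↑(finalEdges 1 ω)}.ncard : ℝ)) /
      (Fintype.card (Fin (completeBipartiteGraph (Fin n) (Fin n)).edgeFinset.card ≃
        {e : Sym2 (Fin n ⊕ Fin n) //
          e ∈ (completeBipartiteGraph (Fin n) (Fin n)).edgeFinset}) : ℝ) =
    (n.factorial : ℝ) *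
      (2 / ((2 * n - 1).choose n : ℝ) - 1 / ((3 * n - 2).choose n : ℝ)) := by
  simp_rw [ncard_regOfDegree_one_subset_eq_card_perm]
  have hswap : ∑ ω : EdgeOrdering (completeBipartiteGraph (Fin n) (Fin n)).edgeFinset,
        #{π | permMatching π ⊆ finalEdges 1 ω} =
      ∑ π : Equiv.Perm (Fin n),
        #{ω : EdgeOrdering (completeBipartiteGraph (Fin n) (Fin n)).edgeFinset |
          permMatching π ⊆ finalEdges 1 ω} := by
    simp only [card_filter]
    exact sum_comm
  rw [← Nat.cast_sum, hswap, Nat.cast_sum,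
    sum_congr rfl fun π _ => card_permMatching_subset_finalEdges hn π, sum_const, card_univ,
    Fintype.card_perm, Fintype.card_fin, nsmul_eq_mul, Fintype.card_equiv (equivFin _).symm,
    Fintype.card_fin, mul_sub, mul_left_comm _ 2, mul_betweenProb_sub_one hn,
    mul_betweenProb_sub_one hn, show n + (n - 1) = 2 * n - 1 by omega,
    show n + (2 * n - 2) = 3 * n - 2 by omega]
  field_simp
end

section
/- Let G be a d-regular finite simple graph on n vertices with d ≥ 2 that contains at least one Hamiltonian cycle. Form G_ω by listing the edges of G in a uniformly random order and taking the shortest initial segment in which every vertex has degree at least 2. Then the expected fraction of the Hamiltonian cycles of G that are contained in G_ω equals 2/binom(n+d−2, n) − 1/binom(n+2d−4, n). -/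
open Finset

/-!
Fix a spanning 2-regular subgraph `J ≤ G`; it has `n` edges. Let `e` be the last edge of `J` in
the ordering `ω`. Once `e` has arrived every vertex has degree at least 2, so `J ⊆ G_ω` exactly
when the process has not stopped before `e`, i.e. when just before `e` some endpoint `w` of `e`
still has degree 1: all `d - 2` edges at `w` outside `J` come after `e`.

For disjoint edge sets `A ∋ e` and `B`, the probability that `e` is the last edge of `A` and every
edge of `B` comes after all of `A` is `1 / (|A| * C(|A| + |B|, |A|))`; this follows from the
invariance of the uniform ordering under transpositions. Inclusion–exclusion over the two
endpoints of `e` and summation over the `n` choices of `e` give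
`P(J ⊆ G_ω) = 2 / C(n+d-2, n) - 1 / C(n+2d-4, n)` for every such `J`, and averaging over the
Hamiltonian cycles gives the theorem.
-/

open Equiv

section Orderings

variable {ι α : Type*} [LinearOrder ι]

def ListsBefore (ω : ι ≃ α) (A B : Finset α) : Prop :=
  ∀ x ∈ A, ∀ y ∈ B, ω.symm x < ω.symm y

def IsLastOf (ω : ι ≃ α) (S : Finset α) (x : α) : Prop :=
  ∀ y ∈ S, ω.symm y ≤ ω.symm x

def IsFirstOf (ω : ι ≃ α) (S : Finset α) (x : α) : Prop :=
  ∀ y ∈ S, ω.symm x ≤ ω.symm y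

lemma existsUnique_isLastOf (ω : ι ≃ α) {S : Finset α} (hS : S.Nonempty) :
    ∃! x, x ∈ S ∧ IsLastOf ω S x := by
  obtain ⟨x, hx, hmax⟩ := S.exists_max_image ω.symm hS
  exact ⟨x, ⟨hx, hmax⟩, fun y ⟨hy, hymax⟩ =>
    ω.symm.injective ((hmax y hy).antisymm (hymax x hx))⟩

lemma existsUnique_isFirstOf (ω : ι ≃ α) {S : Finset α} (hS : S.Nonempty) :
    ∃! x, x ∈ S ∧ IsFirstOf ω S x := by
  obtain ⟨x, hx, hmin⟩ := S.exists_min_image ω.symm hS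
  exact ⟨x, ⟨hx, hmin⟩, fun y ⟨hy, hymin⟩ =>
    ω.symm.injective ((hymin x hx).antisymm (hmin y hy))⟩

lemma listsBefore_iff_of_isLastOf {ω : ι ≃ α} {A B : Finset α} {e : α} (he : e ∈ A)
    (hlast : IsLastOf ω A e) (hAB : Disjoint A B) :
    ListsBefore ω A B ↔ ∀ y ∈ B, ¬ ω.symm y < ω.symm e := by
  refine ⟨fun h y hy => (h e he y hy).not_gt, fun h x hx y hy => ?_⟩
  have hey : e ≠ y := fun hey => disjoint_left.1 hAB he (hey ▸ hy)
  exact (hlast x hx).trans_lt ((not_lt.1 (h y hy)).lt_of_ne (ω.symm.injective.ne hey))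

variable [DecidableEq α]

lemma listsBefore_union_right {ω : ι ≃ α} {A B C : Finset α} :
    ListsBefore ω A (B ∪ C) ↔ ListsBefore ω A B ∧ ListsBefore ω A C := by
  simp only [ListsBefore, mem_union]
  exact ⟨fun h => ⟨fun x hx y hy => h x hx y (.inl hy), fun x hx y hy => h x hx y (.inr hy)⟩,
    fun h x hx y => (·.elim (h.1 x hx y) (h.2 x hx y))⟩

lemma swap_apply_mem_iff {S : Finset α} {x y z : α} (h : x ∈ S ↔ y ∈ S) :
    swap x y z ∈ S ↔ z ∈ S := by
  rcases eq_or_ne z x with rfl | hzx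
  · simp [h]
  rcases eq_or_ne z y with rfl | hzy
  · simp [h]
  rw [swap_apply_of_ne_of_ne hzx hzy]

lemma forall_mem_swap_iff {S : Finset α} {x y : α} (h : x ∈ S ↔ y ∈ S) {P : α → Prop} :
    (∀ z ∈ S, P (swap x y z)) ↔ ∀ z ∈ S, P z := by
  refine ⟨fun hP z hz => ?_, fun hP z hz => hP _ ((swap_apply_mem_iff h).2 hz)⟩
  simpa using hP (swap x y z) ((swap_apply_mem_iff h).2 hz)

lemma listsBefore_trans_swap_iff {ω : ι ≃ α} {A B : Finset α} {x y : α}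
    (hA : x ∈ A ↔ y ∈ A) (hB : x ∈ B ↔ y ∈ B) :
    ListsBefore (ω.trans (swap x y)) A B ↔ ListsBefore ω A B := by
  simp only [ListsBefore, symm_trans_apply, symm_swap]
  exact (forall_mem_swap_iff hA (P := fun z => ∀ w ∈ B, ω.symm z < ω.symm (swap x y w))).trans
    (forall₂_congr fun z _ => forall_mem_swap_iff hB (P := fun w => ω.symm z < ω.symm w))

lemma isLastOf_trans_swap_iff {ω : ι ≃ α} {S : Finset α} {x y : α} (hx : x ∈ S)
    (hy : y ∈ S) :
    IsLastOf (ω.trans (swap x y)) S y ↔ IsLastOf ω S x := by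
  simp only [IsLastOf, symm_trans_apply, symm_swap, swap_apply_right]
  exact forall_mem_swap_iff (iff_of_true hx hy) (P := (ω.symm · ≤ ω.symm x))

lemma isFirstOf_trans_swap_iff {ω : ι ≃ α} {S : Finset α} {x y : α} (hx : x ∈ S)
    (hy : y ∈ S) :
    IsFirstOf (ω.trans (swap x y)) S y ↔ IsFirstOf ω S x := by
  simp only [IsFirstOf, symm_trans_apply, symm_swap, swap_apply_right]
  exact forall_mem_swap_iff (iff_of_true hx hy) (P := (ω.symm x ≤ ω.symm ·))

lemma listsBefore_and_isFirstOf_iff {ω : ι ≃ α} {A B : Finset α} {y : α} (hAB : Disjoint A B)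
    (hy : y ∈ B) :
    ListsBefore ω A B ∧ IsFirstOf ω B y ↔
      ListsBefore ω (insert y A) (B.erase y) ∧ IsLastOf ω (insert y A) y := by
  have hlt {u v : α} (huv : u ≠ v) (h : ω.symm u ≤ ω.symm v) : ω.symm u < ω.symm v :=
    h.lt_of_ne (ω.symm.injective.ne huv)
  constructor
  · rintro ⟨hAB', hfirst⟩
    refine ⟨fun x hx z hz => ?_, fun x hx => ?_⟩
    · rcases mem_insert.1 hx with rfl | hx
      · exact hlt (ne_of_mem_erase hz).symm (hfirst z (mem_of_mem_erase hz))
      · exact hAB' x hx z (mem_of_mem_erase hz)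
    · rcases mem_insert.1 hx with rfl | hx
      · exact le_rfl
      · exact (hAB' x hx y hy).le
  · rintro ⟨hAB', hlast⟩
    refine ⟨fun x hx z hz => ?_, fun z hz => ?_⟩
    · rcases eq_or_ne z y with rfl | hzy
      · exact hlt (disjoint_left.1 hAB hx ∘ (· ▸ hz)) (hlast x (mem_insert_of_mem hx))
      · exact hAB' x (mem_insert_of_mem hx) z (mem_erase.2 ⟨hzy, hz⟩)
    · rcases eq_or_ne z y with rfl | hzy
      · exact le_rfl
      · exact (hAB' y (mem_insert_self y A) z (mem_erase.2 ⟨hzy, hz⟩)).le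

end Orderings

lemma card_filter_eq_sum_card_filter_and {X α : Type*} [Fintype X] {S : Finset α}
    (M : α → X → Prop) [∀ x, DecidablePred (M x)] (hM : ∀ ω, ∃! x, x ∈ S ∧ M x ω)
    (Q : X → Prop) [DecidablePred Q] :
    #{ω | Q ω} = ∑ x ∈ S, #{ω | Q ω ∧ M x ω} := by
  classical
  rw [← card_biUnion]
  · congr 1
    ext ω
    simp only [mem_filter, mem_univ, true_and, mem_biUnion]
    refine ⟨fun hQ => ?_, fun ⟨_, _, hQ, _⟩ => hQ⟩
    obtain ⟨x, ⟨hx, hMx⟩, -⟩ := hM ω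
    exact ⟨x, hx, hQ, hMx⟩
  · intro x hx y hy hxy
    simp only [Function.onFun, disjoint_filter]
    rintro ω - ⟨-, hMx⟩ ⟨-, hMy⟩
    exact hxy ((hM ω).unique ⟨hx, hMx⟩ ⟨hy, hMy⟩)

lemma card_filter_and_mul_card_of_swap {ι α : Type*} [Fintype ι] [DecidableEq ι] [Fintype α]
    [DecidableEq α] {S : Finset α} {x : α} (Q : (ι ≃ α) → Prop)
    (M : α → (ι ≃ α) → Prop) [DecidablePred Q] [∀ y, DecidablePred (M y)]
    (hQ : ∀ y ∈ S, ∀ ω, Q (ω.trans (swap x y)) ↔ Q ω)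
    (hM : ∀ y ∈ S, ∀ ω, M y (ω.trans (swap x y)) ↔ M x ω)
    (hM_unique : ∀ ω, ∃! y, y ∈ S ∧ M y ω) :
    #{ω | Q ω ∧ M x ω} * #S = #{ω | Q ω} := by
  rw [card_filter_eq_sum_card_filter_and M hM_unique Q, mul_comm]
  refine (sum_const_nat fun y hy => ?_).symm
  have hinv (ω : ι ≃ α) : (ω.trans (swap x y)).trans (swap x y) = ω := by ext; simp
  refine card_nbij' (·.trans (swap x y)) (·.trans (swap x y)) ?_ ?_ ?_ ?_
  · intro ω hω
    simp only [mem_coe, mem_filter, mem_univ, true_and] at hω ⊢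
    exact ⟨(hQ y hy ω).2 hω.1, (hM y hy _).1 (by rw [hinv]; exact hω.2)⟩
  · intro ω hω
    simp only [mem_coe, mem_filter, mem_univ, true_and] at hω ⊢
    exact ⟨(hQ y hy ω).2 hω.1, (hM y hy ω).2 hω.2⟩
  · intro ω _; exact hinv ω
  · intro ω _; exact hinv ω

section Counting
open scoped Classical
variable {ι α : Type*} [Fintype ι] [LinearOrder ι] [Fintype α] [DecidableEq α]

lemma card_filter_listsBefore_mul_choose {A B : Finset α} (hAB : Disjoint A B) :
    #{ω : ι ≃ α | ListsBefore ω A B} * (#A + #B).choose #A = Fintype.card (ι ≃ α) := by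
  induction B using Finset.induction_on generalizing A with
  | empty =>
    simp [ListsBefore]
  | insert y B hyB ih =>
    have hyA : y ∉ A := disjoint_right.1 hAB (mem_insert_self y B)
    have hAB₀ : Disjoint A B := disjoint_of_subset_right (subset_insert y B) hAB
    have hinsert : Disjoint (insert y A) B := disjoint_insert_left.2 ⟨hyB, hAB₀⟩
    have hfirst := card_filter_and_mul_card_of_swap (S := insert y B) (x := y)
      (fun ω : ι ≃ α => ListsBefore ω A (insert y B))
      (fun z ω => IsFirstOf ω (insert y B) z)
      (fun z hz ω => listsBefore_trans_swap_iff
        (iff_of_false hyA (disjoint_right.1 hAB hz)) (iff_of_true (mem_insert_self y B) hz))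
      (fun z hz ω => isFirstOf_trans_swap_iff (mem_insert_self y B) hz)
      (fun ω => existsUnique_isFirstOf ω (insert_nonempty y B))
    have hlast := card_filter_and_mul_card_of_swap (S := insert y A) (x := y)
      (fun ω : ι ≃ α => ListsBefore ω (insert y A) B)
      (fun z ω => IsLastOf ω (insert y A) z)
      (fun z hz ω => listsBefore_trans_swap_iff
        (iff_of_true (mem_insert_self y A) hz) (iff_of_false hyB (disjoint_left.1 hinsert hz)))
      (fun z hz ω => isLastOf_trans_swap_iff (mem_insert_self y A) hz)
      (fun ω => existsUnique_isLastOf ω (insert_nonempty y A))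
    have hsame : #{ω : ι ≃ α | ListsBefore ω A (insert y B) ∧ IsFirstOf ω (insert y B) y}
        = #{ω : ι ≃ α | ListsBefore ω (insert y A) B ∧ IsLastOf ω (insert y A) y} := by
      refine congrArg card (filter_congr fun ω _ => ?_)
      rw [listsBefore_and_isFirstOf_iff hAB (mem_insert_self y B), erase_insert hyB]
    have hchoose : (#B + 1) * (#A + (#B + 1)).choose #A
        = (#A + 1) * (#A + 1 + #B).choose (#A + 1) := by
      rw [mul_comm, mul_comm (#A + 1), show #A + 1 + #B = #A + (#B + 1) by ring,
        Nat.choose_succ_right_eq]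
      congr 1; omega
    rw [← ih hinsert, ← hfirst, ← hlast, hsame, card_insert_of_notMem hyB,
      card_insert_of_notMem hyA, mul_assoc, mul_assoc, hchoose]

lemma card_filter_listsBefore_isLastOf {A B : Finset α} {e : α} (he : e ∈ A)
    (hAB : Disjoint A B) :
    (#{ω : ι ≃ α | ListsBefore ω A B ∧ IsLastOf ω A e} : ℝ)
      = Fintype.card (ι ≃ α) / (#A * (#A + #B).choose #A) := by
  have hlast := card_filter_and_mul_card_of_swap (fun ω : ι ≃ α => ListsBefore ω A B)
    (fun z ω => IsLastOf ω A z)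
    (fun z hz ω => listsBefore_trans_swap_iff (iff_of_true he hz)
      (iff_of_false (disjoint_left.1 hAB he) (disjoint_left.1 hAB hz)))
    (fun z hz ω => isLastOf_trans_swap_iff he hz)
    (fun ω => existsUnique_isLastOf ω ⟨e, he⟩)
  have hpos : (0 : ℝ) < #A * (#A + #B).choose #A := by
    have := card_pos.2 ⟨e, he⟩
    have := Nat.choose_pos (Nat.le_add_right #A #B)
    positivity
  rw [eq_div_iff hpos.ne', ← card_filter_listsBefore_mul_choose hAB, ← hlast]
  push_cast
  ring

end Counting

section Prefix
variable {V : Type*} [DecidableEq V] {s : Finset (Sym2 V)}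

lemma prefixEdges_eq_map (ω : Fin s.card ≃ s) (i : ℕ) :
    prefixEdges ω i = ({x | (ω.symm x : ℕ) < i} : Finset s).map (.subtype (· ∈ s)) := by
  ext x
  simp only [prefixEdges, mem_image, mem_filter, mem_univ, true_and, mem_map,
    Function.Embedding.subtype_apply]
  exact ⟨fun ⟨j, hj, hx⟩ => ⟨ω j, by simpa using hj, hx⟩,
    fun ⟨y, hy, hx⟩ => ⟨ω.symm y, hy, by simpa using hx⟩⟩

lemma coe_mem_prefixEdges {ω : Fin s.card ≃ s} {i : ℕ} {x : s} :
    (x : Sym2 V) ∈ prefixEdges ω i ↔ (ω.symm x : ℕ) < i := by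
  simp [prefixEdges_eq_map]

lemma prefixEdges_mono (ω : Fin s.card ≃ s) : Monotone (prefixEdges ω) := fun i j hij => by
  simp only [prefixEdges_eq_map]
  exact map_subset_map.2 (monotone_filter_right _ fun _ _ hx => lt_of_lt_of_le hx hij)

lemma prefixEdges_card (ω : Fin s.card ≃ s) : prefixEdges ω s.card = s := by
  ext x
  refine ⟨fun hx => ?_, fun hx => coe_mem_prefixEdges (x := ⟨x, hx⟩).2 (ω.symm _).isLt⟩
  obtain ⟨y, -, rfl⟩ := mem_map.1 ((prefixEdges_eq_map ω _) ▸ hx)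
  exact y.2

lemma degIn_prefixEdges (ω : Fin s.card ≃ s) (i : ℕ) (v : V) :
    degIn (prefixEdges ω i) v = #{x : s | v ∈ (x : Sym2 V) ∧ (ω.symm x : ℕ) < i} := by
  rw [degIn, prefixEdges_eq_map, filter_map, card_map, filter_filter]
  simp only [Function.comp_apply, Function.Embedding.subtype_apply, and_comm]

lemma degIn_mono {t u : Finset (Sym2 V)} (h : t ⊆ u) (v : V) : degIn t v ≤ degIn u v :=
  card_le_card (filter_subset_filter _ h)

lemma lt_stopIndex_iff [Fintype V] {δ : ℕ} (ω : Fin s.card ≃ s) (hs : ∀ v, δ ≤ degIn s v)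
    {p : ℕ} : p < stopIndex δ ω ↔ ∃ v, degIn (prefixEdges ω p) v < δ := by
  set S := {i | ∀ v, δ ≤ degIn (prefixEdges ω i) v}
  have hS : S.Nonempty :=
    ⟨s.card, by simpa only [S, Set.mem_ofPred_eq, prefixEdges_card] using hs⟩
  have hup {i j : ℕ} (hij : i ≤ j) (hi : i ∈ S) : j ∈ S := fun v =>
    (hi v).trans (degIn_mono (prefixEdges_mono ω hij) v)
  have : p < sInf S ↔ p ∉ S :=
    ⟨Nat.notMem_of_lt_sInf, fun hp => not_le.1 fun h => hp (hup h (Nat.sInf_mem hS))⟩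
  simpa [S, stopIndex] using this

end Prefix

lemma card_filter_coe {β : Type*} (s : Finset β) (p : β → Prop) [DecidablePred p] :
    #{x : s | p x} = #{x ∈ s | p x} := by
  rw [← card_map (Function.Embedding.subtype _)]
  congr 1
  ext x
  simp [and_comm]

lemma degree_eq_of_regOfDegree {V : Type*} [Fintype V] {J : SimpleGraph V} [DecidableRel J.Adj]
    {δ : ℕ} (hJ : regOfDegree J δ) (v : V) : J.degree v = δ := by
  rw [← hJ v, Set.ncard_eq_toFinset_card', ← SimpleGraph.card_neighborSet_eq_degree,
    Set.toFinset_card]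

section EdgeOrderings
open scoped Classical
variable {V : Type*} [Fintype V] {G J : SimpleGraph V} [DecidableRel G.Adj]

variable (G J) in
noncomputable def edgesIn : Finset G.edgeFinset := {x | (x : Sym2 V) ∈ J.edgeSet}

lemma card_edgesIn (hJG : J ≤ G) (hJ : regOfDegree J 2) :
    #(edgesIn G J) = Fintype.card V := by
  have hcard : #(edgesIn G J) = #J.edgeFinset := by
    rw [edgesIn, card_filter_coe]
    congr 1
    ext x
    simpa using fun hx => SimpleGraph.edgeSet_mono hJG hx
  have := J.sum_degrees_eq_twice_card_edges
  simp only [degree_eq_of_regOfDegree hJ, sum_const, card_univ, smul_eq_mul] at this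
  omega

variable [DecidableEq V] {ω : Fin G.edgeFinset.card ≃ G.edgeFinset} {e : G.edgeFinset}

variable (G J) in
noncomputable def edgesAtNotIn (w : V) : Finset G.edgeFinset :=
  {x | w ∈ (x : Sym2 V) ∧ (x : Sym2 V) ∉ J.edgeSet}

lemma degIn_edgeFinset (v : V) : degIn G.edgeFinset v = G.degree v := by
  rw [degIn, ← SimpleGraph.incidenceFinset_eq_filter, SimpleGraph.card_incidenceFinset_eq_degree]

lemma card_filter_edgesIn_mem {δ : ℕ} (hJG : J ≤ G) (hJ : regOfDegree J δ) (w : V) :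
    #{x ∈ edgesIn G J | w ∈ x.1} = δ := by
  rw [edgesIn, filter_filter, card_filter_coe _ fun x => x ∈ J.edgeSet ∧ w ∈ x,
    ← degree_eq_of_regOfDegree hJ w,
    ← SimpleGraph.card_incidenceFinset_eq_degree, SimpleGraph.incidenceFinset_eq_filter]
  congr 1
  ext x
  simpa using fun hx _ => SimpleGraph.edgeSet_mono hJG hx

lemma card_edgesAtNotIn {d δ : ℕ} (hG : G.IsRegularOfDegree d) (hJG : J ≤ G)
    (hJ : regOfDegree J δ) (w : V) : #(edgesAtNotIn G J w) = d - δ := by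
  have hsplit := card_filter_add_card_filter_not (s := {x : G.edgeFinset | w ∈ (x : Sym2 V)})
    (fun x => (x : Sym2 V) ∈ J.edgeSet)
  have hdeg : #{x : G.edgeFinset | w ∈ (x : Sym2 V)} = d := by
    rw [card_filter_coe _ (w ∈ ·), ← SimpleGraph.incidenceFinset_eq_filter,
      SimpleGraph.card_incidenceFinset_eq_degree, hG w]
  rw [filter_filter, filter_filter, hdeg] at hsplit
  have hJw := card_filter_edgesIn_mem hJG hJ w
  rw [edgesIn, filter_filter] at hJw
  rw [edgesAtNotIn]
  simp only [and_comm (a := (_ : Sym2 V) ∈ J.edgeSet)] at hJw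
  omega

lemma disjoint_edgesIn_edgesAtNotIn (w : V) : Disjoint (edgesIn G J) (edgesAtNotIn G J w) := by
  simp only [edgesIn, edgesAtNotIn, disjoint_filter]
  exact fun _ _ hx h => h.2 hx

lemma degIn_prefixEdges_of_isLastOf (hJG : J ≤ G) (hJ : regOfDegree J 2)
    (he : e ∈ edgesIn G J) (hlast : IsLastOf ω (edgesIn G J) e) (w : V) :
    degIn (prefixEdges ω (ω.symm e)) w
      = (if w ∈ e.1 then 1 else 2) + #{y ∈ edgesAtNotIn G J w | ω.symm y < ω.symm e} := by
  set T : Finset G.edgeFinset := {x | w ∈ x.1 ∧ (ω.symm x : ℕ) < ω.symm e}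
  have hin : T.filter (·.1 ∈ J.edgeSet) = {x ∈ edgesIn G J | w ∈ x.1}.erase e := by
    ext x
    simp only [T, edgesIn, mem_filter, mem_univ, true_and, mem_erase, Fin.val_fin_lt]
    constructor
    · rintro ⟨⟨hw, hlt⟩, hx⟩
      exact ⟨fun h => hlt.ne (h ▸ rfl), hx, hw⟩
    · rintro ⟨hne, hx, hw⟩
      refine ⟨⟨hw, (hlast x (by simpa [edgesIn] using hx)).lt_of_ne ?_⟩, hx⟩
      exact ω.symm.injective.ne hne
  have hout :
      T.filter (·.1 ∉ J.edgeSet) = {y ∈ edgesAtNotIn G J w | ω.symm y < ω.symm e} := by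
    ext x
    simp only [T, edgesAtNotIn, mem_filter, mem_univ, true_and, Fin.val_fin_lt]
    tauto
  have herase : #({x ∈ edgesIn G J | w ∈ x.1}.erase e) = if w ∈ e.1 then 1 else 2 := by
    split_ifs with hwe
    · rw [card_erase_of_mem (mem_filter.2 ⟨he, hwe⟩), card_filter_edgesIn_mem hJG hJ]
    · rw [erase_eq_of_notMem (show e ∉ {x ∈ edgesIn G J | w ∈ x.1} from
        fun h => hwe (mem_filter.1 h).2), card_filter_edgesIn_mem hJG hJ]
  rw [degIn_prefixEdges, ← card_filter_add_card_filter_not (s := T) (·.1 ∈ J.edgeSet), hin,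
    hout, herase]

lemma subset_finalEdges_iff (hG : ∀ v, 2 ≤ G.degree v) (hJG : J ≤ G) (hJ : regOfDegree J 2)
    (he : e ∈ edgesIn G J) (hlast : IsLastOf ω (edgesIn G J) e) :
    J.edgeSet ⊆ finalEdges 2 ω ↔
      ∃ w ∈ e.1, ListsBefore ω (edgesIn G J) (edgesAtNotIn G J w) := by
  have hstop : J.edgeSet ⊆ finalEdges 2 ω ↔ (ω.symm e : ℕ) < stopIndex 2 ω := by
    refine ⟨fun h => coe_mem_prefixEdges.1 (h (by simpa [edgesIn] using he)), fun h f hf => ?_⟩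
    have hfG : f ∈ G.edgeFinset := G.mem_edgeFinset.2 (SimpleGraph.edgeSet_mono hJG hf)
    exact coe_mem_prefixEdges (x := ⟨f, hfG⟩).2
      ((Fin.val_fin_le.2 (hlast ⟨f, hfG⟩ (by simpa [edgesIn] using hf))).trans_lt h)
  rw [hstop, lt_stopIndex_iff ω fun v => (degIn_edgeFinset (G := G) v).symm ▸ hG v]
  simp only [degIn_prefixEdges_of_isLastOf hJG hJ he hlast,
    listsBefore_iff_of_isLastOf he hlast (disjoint_edgesIn_edgesAtNotIn _)]
  refine exists_congr fun w => ?_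
  split_ifs with hwe <;> simp [hwe, filter_eq_empty_iff]
  omega

lemma disjoint_edgesAtNotIn {u v : V} (huv : u ≠ v) (he : s(u, v) ∈ J.edgeSet) :
    Disjoint (edgesAtNotIn G J u) (edgesAtNotIn G J v) := by
  simp only [edgesAtNotIn, disjoint_filter]
  rintro x - ⟨hu, hxJ⟩ ⟨hv, -⟩
  exact hxJ ((Sym2.mem_and_mem_iff huv).1 ⟨hu, hv⟩ ▸ he)

lemma card_filter_subset_finalEdges_and_isLastOf {d : ℕ} (hG : G.IsRegularOfDegree d)
    (hd : 2 ≤ d) (hJG : J ≤ G) (hJ : regOfDegree J 2) (he : e ∈ edgesIn G J) :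
    (#{ω | J.edgeSet ⊆ finalEdges 2 ω ∧ IsLastOf ω (edgesIn G J) e} : ℝ)
      = Fintype.card (Fin G.edgeFinset.card ≃ G.edgeFinset) *
        (2 / (Fintype.card V * (Fintype.card V + d - 2).choose (Fintype.card V))
          - 1 / (Fintype.card V * (Fintype.card V + 2 * d - 4).choose (Fintype.card V))) := by
  obtain ⟨⟨u, v⟩, hev⟩ := Quot.exists_rep e.1
  replace hev : e.1 = s(u, v) := hev.symm
  have huv : u ≠ v := G.ne_of_adj (G.mem_edgeFinset.1 (hev ▸ e.2))
  have heJ : s(u, v) ∈ J.edgeSet := hev ▸ (mem_filter.1 he).2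
  have hiff (ω : Fin G.edgeFinset.card ≃ G.edgeFinset) :
      (J.edgeSet ⊆ finalEdges 2 ω ∧ IsLastOf ω (edgesIn G J) e) ↔
        (ListsBefore ω (edgesIn G J) (edgesAtNotIn G J u) ∧ IsLastOf ω (edgesIn G J) e) ∨
          (ListsBefore ω (edgesIn G J) (edgesAtNotIn G J v) ∧ IsLastOf ω (edgesIn G J) e) := by
    rw [← or_and_right]
    refine and_congr_left fun hlast => ?_
    rw [subset_finalEdges_iff (fun w => (hG w).symm ▸ hd) hJG hJ he hlast, hev]
    simp
  have hinter := card_union_add_card_inter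
    {ω : Fin G.edgeFinset.card ≃ G.edgeFinset |
      ListsBefore ω (edgesIn G J) (edgesAtNotIn G J u) ∧ IsLastOf ω (edgesIn G J) e}
    {ω : Fin G.edgeFinset.card ≃ G.edgeFinset |
      ListsBefore ω (edgesIn G J) (edgesAtNotIn G J v) ∧ IsLastOf ω (edgesIn G J) e}
  rw [← filter_or, ← filter_and, ← filter_congr fun ω _ => hiff ω] at hinter
  simp only [← and_and_right, ← listsBefore_union_right] at hinter
  have hBuv : #(edgesAtNotIn G J u ∪ edgesAtNotIn G J v) = 2 * d - 4 := by
    rw [card_union_of_disjoint (disjoint_edgesAtNotIn huv heJ), card_edgesAtNotIn hG hJG hJ,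
      card_edgesAtNotIn hG hJG hJ]
    omega
  have hreal := congrArg (Nat.cast : ℕ → ℝ) hinter
  push_cast at hreal
  rw [card_filter_listsBefore_isLastOf he (disjoint_edgesIn_edgesAtNotIn u),
    card_filter_listsBefore_isLastOf he (disjoint_edgesIn_edgesAtNotIn v),
    card_filter_listsBefore_isLastOf he (disjoint_union_right.2
      ⟨disjoint_edgesIn_edgesAtNotIn u, disjoint_edgesIn_edgesAtNotIn v⟩),
    hBuv, card_edgesAtNotIn hG hJG hJ u, card_edgesAtNotIn hG hJG hJ v, card_edgesIn hJG hJ,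
    ← Nat.add_sub_assoc hd,
    ← Nat.add_sub_assoc (by omega)] at hreal
  rw [mul_sub, mul_div_assoc', mul_div_assoc', mul_one, mul_two, add_div]
  linarith

lemma card_filter_subset_finalEdges [Nonempty V] {d : ℕ} (hG : G.IsRegularOfDegree d)
    (hd : 2 ≤ d) (hJG : J ≤ G) (hJ : regOfDegree J 2) :
    (#{ω : Fin G.edgeFinset.card ≃ G.edgeFinset | J.edgeSet ⊆ finalEdges 2 ω} : ℝ)
      = Fintype.card (Fin G.edgeFinset.card ≃ G.edgeFinset) *
        (2 / (Fintype.card V + d - 2).choose (Fintype.card V)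
          - 1 / (Fintype.card V + 2 * d - 4).choose (Fintype.card V)) := by
  have hE : (edgesIn G J).Nonempty :=
    card_pos.1 (by rw [card_edgesIn hJG hJ]; exact Fintype.card_pos)
  rw [card_filter_eq_sum_card_filter_and (fun e ω => IsLastOf ω (edgesIn G J) e)
    (fun ω => existsUnique_isLastOf ω hE), Nat.cast_sum,
    sum_congr rfl fun e he => card_filter_subset_finalEdges_and_isLastOf hG hd hJG hJ he,
    sum_const, card_edgesIn hJG hJ, nsmul_eq_mul]
  have : (Fintype.card V : ℝ) ≠ 0 := Nat.cast_ne_zero.2 Fintype.card_ne_zero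
  field_simp

end EdgeOrderings

lemma sum_ncard_div_ncard_div_card_eq {Ω β : Type*} [Fintype Ω] [Nonempty Ω] [Finite β]
    {H : β → Prop} {P : β → Ω → Prop} [∀ J, DecidablePred (P J)] {q : ℝ}
    (hH : ∃ J, H J)
    (hP : ∀ J, H J → (#{ω | P J ω} : ℝ) = Fintype.card Ω * q) :
    (∑ ω, ({J | H J ∧ P J ω}.ncard : ℝ) / {J | H J}.ncard) / Fintype.card Ω = q := by
  classical
  cases nonempty_fintype β
  set Hf : Finset β := {J | H J}
  have hncard (ω : Ω) :
      {J | H J ∧ P J ω}.ncard = #(Hf.bipartiteAbove (fun ω J => P J ω) ω) := by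
    rw [← Set.ncard_coe_finset]
    congr 1
    ext J
    simp [Hf, bipartiteAbove]
  have hHf : {J | H J}.ncard = #Hf := by
    rw [← Set.ncard_coe_finset]
    congr 1
    ext J
    simp [Hf]
  have hpos : (0 : ℝ) < #Hf := by
    obtain ⟨J, hJ⟩ := hH
    exact_mod_cast card_pos.2 ⟨J, by simpa [Hf] using hJ⟩
  simp_rw [hncard, hHf, ← sum_div]
  rw [← Nat.cast_sum, sum_card_bipartiteAbove_eq_sum_card_bipartiteBelow, Nat.cast_sum]
  simp only [bipartiteBelow]
  rw [sum_congr rfl fun J hJ => hP J (by simpa [Hf] using hJ), sum_const, nsmul_eq_mul]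
  field_simp

/-- Let `G` be a `d`-regular finite simple graph on `n` vertices, `d ≥ 2`, containing at
least one Hamiltonian cycle (connected 2-regular spanning subgraph).  Form `G_ω` by listing
the edges of `G` in a uniformly random order and stopping as soon as every vertex has
degree at least `2`.  Then the expected fraction of the Hamiltonian cycles of `G` contained
in `G_ω` equals `2/C(n+d−2,n) − 1/C(n+2d−4,n)`. -/
theorem expected_fraction_of_hamiltonian_cycles_regular
    {V : Type*} [Fintype V] [DecidableEq V] (n d : ℕ) (hcard : Fintype.card V = n)
    (hd : 2 ≤ d) (G : SimpleGraph V) [DecidableRel G.Adj] (hG : G.IsRegularOfDegree d)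
    (hex : ∃ J : SimpleGraph V, J ≤ G ∧ J.Connected ∧ regOfDegree J 2) :
    (∑ ω : Fin G.edgeFinset.card ≃ {e : Sym2 V // e ∈ G.edgeFinset},
        (({J : SimpleGraph V | J ≤ G ∧ J.Connected ∧ regOfDegree J 2 ∧
              J.edgeSet ⊆ ↑(finalEdges 2 ω)}.ncard : ℝ) /
          ({J : SimpleGraph V | J ≤ G ∧ J.Connected ∧ regOfDegree J 2}.ncard : ℝ))) /
      (Fintype.card (Fin G.edgeFinset.card ≃ {e : Sym2 V // e ∈ G.edgeFinset}) : ℝ) =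
    2 / ((n + d - 2).choose n : ℝ) - 1 / ((n + 2 * d - 4).choose n : ℝ) := by
  subst hcard
  obtain ⟨J₀, hJ₀⟩ := hex
  have : Nonempty V := hJ₀.2.1.nonempty
  have : Nonempty (Fin G.edgeFinset.card ≃ G.edgeFinset) := ⟨G.edgeFinset.equivFin.symm⟩
  classical
  have hfrac := sum_ncard_div_ncard_div_card_eq ⟨J₀, hJ₀⟩
    fun J (hJ : J ≤ G ∧ J.Connected ∧ regOfDegree J 2) =>
      card_filter_subset_finalEdges hG hd hJ.1 hJ.2.2
  simp only [and_assoc] at hfrac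
  exact hfrac
end
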